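/- arXiv:2502.15741 — 3 statements merged into one kernel-verified Lean document; each statement's English description precedes it below -/
import Mathlib

section
/- (Isometry of the real Fourier transform) For every Schwartz function f : ℝ^n → ℝ, the L² norm of F_R[f] equals the L² norm of f: ∫_{ℝ^n} (F_R[f](x))² dx = ∫_{ℝ^n} (f(x))² dx. -/
open MeasureTheory Real

namespace RealFourierAux

open Complex FourierTransform SchwartzMap
open scoped RealInnerProductSpace

variable {V : Type*} [NormedAddCommGroup V] [InnerProductSpace ℝ V] [FiniteDimensional ℝ V]
  [MeasurableSpace V] [BorelSpace V]

omit [InnerProductSpace ℝ V] [FiniteDimensional ℝ V] [MeasurableSpace V] [BorelSpace V] in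
lemma const_one_temperate [NormedSpace ℝ V] :
    Function.HasTemperateGrowth (fun _ : V => (1 : ℂ)) := by
  refine ⟨contDiff_const, fun n => ⟨0, 1, fun x => ?_⟩⟩
  rcases Nat.eq_zero_or_pos n with h | h
  · subst h; simp
  · rw [iteratedFDeriv_const_of_ne (by omega)]
    simp

/-- complexification of a real Schwartz function -/
noncomputable def ofRealS (f : 𝓢(V, ℝ)) : 𝓢(V, ℂ) :=
  SchwartzMap.bilinLeftCLM (ContinuousLinearMap.lsmul ℝ ℝ : ℝ →L[ℝ] ℂ →L[ℝ] ℂ)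
    const_one_temperate f

lemma ofRealS_apply (f : 𝓢(V, ℝ)) (x : V) : ofRealS f x = (f x : ℂ) := by
  show (f x : ℝ) • (1 : ℂ) = (f x : ℂ)
  rw [Complex.real_smul, mul_one]

lemma conj_fourier (u : V → ℂ) (ξ : V) :
    𝓕 (fun x => (starRingEnd ℂ) (u x)) ξ = (starRingEnd ℂ) (𝓕⁻ u ξ) := by
  rw [Real.fourier_eq', Real.fourierInv_eq', ← integral_conj]
  congr 1; ext v
  rw [smul_eq_mul, smul_eq_mul, map_mul, ← Complex.exp_conj]
  have : (starRingEnd ℂ) (↑(2 * π * ⟪v, ξ⟫) * I) = ↑(-2 * π * ⟪v, ξ⟫) * I := by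
    rw [map_mul, Complex.conj_ofReal, Complex.conj_I]
    push_cast; ring
  rw [this]

omit [FiniteDimensional ℝ V] [MeasurableSpace V] [BorelSpace V] in
lemma innerl_flip : (innerₗ V).flip = innerₗ V := by
  apply LinearMap.ext; intro x; apply LinearMap.ext; intro y
  simpa using real_inner_comm x y

lemma parseval_c (gS : 𝓢(V, ℂ)) :
    ∫ ξ, Complex.normSq (𝓕 ⇑gS ξ) = ∫ x, Complex.normSq (gS x) := by
  set GS : 𝓢(V, ℂ) := fourierTransformCLM ℂ gS with hGS
  have hGSc : ⇑GS = 𝓕 ⇑gS := by simp [hGS, SchwartzMap.fourier_coe]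
  have hint : Integrable (fun ξ => (starRingEnd ℂ) (GS ξ)) volume := by
    refine (GS.integrable (μ := volume)).norm.mono' ?_ ?_
    · exact (Complex.continuous_conj.comp GS.continuous).aestronglyMeasurable
    · filter_upwards with x; simp
  have key := VectorFourier.integral_bilin_fourierIntegral_eq_flip
      (μ := (volume : Measure V)) (ν := (volume : Measure V))
      (L := innerₗ V) (f := ⇑gS) (g := fun ξ => (starRingEnd ℂ) (GS ξ))
      (ContinuousLinearMap.mul ℂ ℂ) Real.continuous_fourierChar
      continuous_inner gS.integrable hint
  rw [innerl_flip] at key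
  have h1 : (VectorFourier.fourierIntegral 𝐞 volume (innerₗ V) ⇑gS) = 𝓕 ⇑gS := rfl
  have h2 : (VectorFourier.fourierIntegral 𝐞 volume (innerₗ V)
      (fun ξ => (starRingEnd ℂ) (GS ξ))) = fun x => (starRingEnd ℂ) (gS x) := by
    ext x
    have hcf := conj_fourier (⇑GS) x
    have hinv : 𝓕⁻ ⇑GS x = gS x := by
      rw [hGSc]
      exact (gS.integrable (μ := volume)).fourierInv_fourier_eq (by rw [← hGSc]; exact GS.integrable)
        gS.continuous.continuousAt
    calc VectorFourier.fourierIntegral 𝐞 volume (innerₗ V) (fun ξ => (starRingEnd ℂ) (GS ξ)) x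
        = 𝓕 (fun ξ => (starRingEnd ℂ) (GS ξ)) x := rfl
      _ = (starRingEnd ℂ) (𝓕⁻ ⇑GS x) := hcf
      _ = (starRingEnd ℂ) (gS x) := by rw [hinv]
  rw [h1, h2] at key
  simp only [ContinuousLinearMap.mul_apply', hGSc, Complex.mul_conj] at key
  have e1 : ∫ ξ, ((Complex.normSq (𝓕 ⇑gS ξ) : ℝ) : ℂ) = ((∫ ξ, Complex.normSq (𝓕 ⇑gS ξ) : ℝ) : ℂ) :=
    integral_ofReal
  have e2 : ∫ x, ((Complex.normSq (gS x) : ℝ) : ℂ) = ((∫ x, Complex.normSq (gS x) : ℝ) : ℂ) :=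
    integral_ofReal
  exact Complex.ofReal_injective (by rw [← e1, ← e2]; exact key)

end RealFourierAux

noncomputable def realFourier {n : ℕ} (f : EuclideanSpace ℝ (Fin n) → ℝ)
    (y : EuclideanSpace ℝ (Fin n)) : ℝ :=
  (2 * π) ^ (-(n : ℝ) / 2) * ∫ x, f x * (Real.cos (inner ℝ y x) - Real.sin (inner ℝ y x))

theorem realFourier_isometry (n : ℕ) (f : SchwartzMap (EuclideanSpace ℝ (Fin n)) ℝ) :
    ∫ x, (realFourier (⇑f) x) ^ 2 = ∫ x, (f x) ^ 2 := by
  classical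
  open Complex FourierTransform SchwartzMap RealFourierAux in
  open scoped RealInnerProductSpace in
  set fC : 𝓢(EuclideanSpace ℝ (Fin n), ℂ) := ofRealS f with hfCdef
  have hfC : ∀ x, fC x = (f x : ℂ) := fun x => ofRealS_apply f x
  set GS : 𝓢(EuclideanSpace ℝ (Fin n), ℂ) := fourierTransformCLM ℂ fC with hGSdef
  set G : EuclideanSpace ℝ (Fin n) → ℂ := 𝓕 ⇑fC with hGdef
  have hGSc : ⇑GS = G := by simp [hGSdef, hGdef, SchwartzMap.fourier_coe]
  have hGcont : Continuous G := by rw [← hGSc]; exact GS.continuous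
  -- bound on ‖G‖
  obtain ⟨C, hC⟩ : ∃ C : ℝ, ∀ ξ : EuclideanSpace ℝ (Fin n), ‖G ξ‖ ≤ C := by
    refine ⟨‖GS.toBoundedContinuousFunction‖, fun ξ => ?_⟩
    rw [← hGSc]
    exact GS.toBoundedContinuousFunction.norm_coe_le_norm ξ
  have hGint : Integrable G volume := by rw [← hGSc]; exact GS.integrable
  -- integrability of normSq ∘ G and re*im
  have hInt1 : Integrable (fun ξ => Complex.normSq (G ξ)) volume := by
    refine (hGint.norm.const_mul C).mono'
      ((Complex.continuous_normSq.comp hGcont).aestronglyMeasurable) ?_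
    filter_upwards with ξ
    rw [Real.norm_eq_abs, _root_.abs_of_nonneg (Complex.normSq_nonneg _), Complex.normSq_eq_norm_sq,
      sq]
    exact mul_le_mul_of_nonneg_right (hC ξ) (norm_nonneg _)
  have hInt2 : Integrable (fun ξ => (G ξ).re * (G ξ).im) volume := by
    refine (hGint.norm.const_mul C).mono'
      ((Complex.continuous_re.comp hGcont).mul (Complex.continuous_im.comp hGcont)).aestronglyMeasurable ?_
    filter_upwards with ξ
    rw [Real.norm_eq_abs, abs_mul]
    calc |(G ξ).re| * |(G ξ).im| ≤ ‖G ξ‖ * ‖G ξ‖ := by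
          exact mul_le_mul (Complex.abs_re_le_norm _) (Complex.abs_im_le_norm _)
            (abs_nonneg _) (norm_nonneg _)
      _ ≤ C * ‖G ξ‖ := mul_le_mul_of_nonneg_right (hC ξ) (norm_nonneg _)
  -- oddness: G (-ξ) = conj (G ξ)
  have hodd : ∀ ξ : EuclideanSpace ℝ (Fin n), G (-ξ) = (starRingEnd ℂ) (G ξ) := by
    intro ξ
    have hreal : (fun x => (starRingEnd ℂ) (fC x)) = ⇑fC := by
      ext x; rw [hfC x, Complex.conj_ofReal]
    have h1 := conj_fourier (⇑fC) ξ
    rw [hreal] at h1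
    have h2 : G ξ = (starRingEnd ℂ) (𝓕⁻ ⇑fC ξ) := h1
    rw [h2, Complex.conj_conj, hGdef]
    exact (Real.fourierInv_eq_fourier_neg (⇑fC) ξ).symm
  -- cross term is zero
  have hzero : ∫ ξ, (G ξ).re * (G ξ).im = 0 := by
    have hneg := integral_neg_eq_self (fun ξ => (G ξ).re * (G ξ).im) (volume : Measure (EuclideanSpace ℝ (Fin n)))
    have hodd' : ∫ ξ, (G (-ξ)).re * (G (-ξ)).im = -∫ ξ, (G ξ).re * (G ξ).im := by
      rw [← integral_neg]
      congr 1; ext ξ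
      rw [hodd ξ, Complex.conj_re, Complex.conj_im]
      ring
    rw [hodd'] at hneg
    linarith
  -- the re + im formula
  have hsum : ∀ ξ : EuclideanSpace ℝ (Fin n), (G ξ).re + (G ξ).im
      = ∫ x, f x * (Real.cos (2*π*⟪x,ξ⟫) - Real.sin (2*π*⟪x,ξ⟫)) := by
    intro ξ
    have hI : Integrable (fun v : EuclideanSpace ℝ (Fin n) => Complex.exp (↑(-2*π*⟪v,ξ⟫) * Complex.I) * fC v) volume := by
      have h0 := (Real.fourierIntegral_convergent_iff (f := ⇑fC) (μ := volume) ξ).2 fC.integrable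
      refine h0.congr (Filter.Eventually.of_forall fun v => ?_)
      show (𝐞 (-⟪v,ξ⟫) : Circle) • fC v = Complex.exp (↑(-2*π*⟪v,ξ⟫) * Complex.I) * fC v
      rw [Circle.smul_def, Real.fourierChar_apply, smul_eq_mul]
      congr 2
      push_cast; ring
    have hG' : G ξ = ∫ v, Complex.exp (↑(-2*π*⟪v,ξ⟫) * Complex.I) * fC v := by
      rw [hGdef, Real.fourier_eq']
      simp_rw [smul_eq_mul]
    have hre : (G ξ).re = ∫ v, f v * Real.cos (2*π*⟪v,ξ⟫) := by
      rw [hG', ← Complex.reCLM_apply, ← ContinuousLinearMap.integral_comp_comm _ hI]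
      congr 1; ext v
      rw [Complex.reCLM_apply, hfC v, Complex.mul_re, Complex.ofReal_re, Complex.ofReal_im,
        Complex.exp_ofReal_mul_I_re]
      have : Real.cos (-2*π*⟪v,ξ⟫) = Real.cos (2*π*⟪v,ξ⟫) := by
        rw [show (-2*π*⟪v,ξ⟫ : ℝ) = -(2*π*⟪v,ξ⟫) by ring, Real.cos_neg]
      rw [this]; ring
    have him : (G ξ).im = ∫ v, -(f v * Real.sin (2*π*⟪v,ξ⟫)) := by
      rw [hG', ← Complex.imCLM_apply, ← ContinuousLinearMap.integral_comp_comm _ hI]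
      congr 1; ext v
      rw [Complex.imCLM_apply, hfC v, Complex.mul_im, Complex.ofReal_re, Complex.ofReal_im,
        Complex.exp_ofReal_mul_I_im]
      have : Real.sin (-2*π*⟪v,ξ⟫) = -Real.sin (2*π*⟪v,ξ⟫) := by
        rw [show (-2*π*⟪v,ξ⟫ : ℝ) = -(2*π*⟪v,ξ⟫) by ring, Real.sin_neg]
      rw [this]; ring
    have hA : Integrable (fun v : EuclideanSpace ℝ (Fin n) => f v * Real.cos (2*π*⟪v,ξ⟫)) volume := by
      refine (f.integrable (μ := volume)).norm.mono'
        ((f.continuous.mul (Real.continuous_cos.comp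
          (continuous_const.mul ((continuous_id.inner continuous_const)))))).aestronglyMeasurable ?_
      filter_upwards with v
      rw [Real.norm_eq_abs, abs_mul, Real.norm_eq_abs]
      calc |f v| * |Real.cos (2*π*⟪v,ξ⟫)| ≤ |f v| * 1 :=
            mul_le_mul_of_nonneg_left (Real.abs_cos_le_one _) (abs_nonneg _)
        _ = |f v| := mul_one _
    have hB : Integrable (fun v : EuclideanSpace ℝ (Fin n) => f v * Real.sin (2*π*⟪v,ξ⟫)) volume := by
      refine (f.integrable (μ := volume)).norm.mono'
        ((f.continuous.mul (Real.continuous_sin.comp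
          (continuous_const.mul ((continuous_id.inner continuous_const)))))).aestronglyMeasurable ?_
      filter_upwards with v
      rw [Real.norm_eq_abs, abs_mul, Real.norm_eq_abs]
      calc |f v| * |Real.sin (2*π*⟪v,ξ⟫)| ≤ |f v| * 1 :=
            mul_le_mul_of_nonneg_left (Real.abs_sin_le_one _) (abs_nonneg _)
        _ = |f v| := mul_one _
    rw [hre, him, integral_neg, ← sub_eq_add_neg, ← integral_sub hA hB]
    congr 1; ext v; ring
  -- pointwise identity for realFourier
  have hpt : ∀ y : EuclideanSpace ℝ (Fin n), realFourier ⇑f y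
      = (2*π) ^ (-(n:ℝ)/2) * ((G ((2*π)⁻¹ • y)).re + (G ((2*π)⁻¹ • y)).im) := by
    intro y
    rw [realFourier, hsum ((2*π)⁻¹ • y)]
    congr 1
    congr 1; ext x
    have h2 : (2*π*⟪x, (2*π)⁻¹ • y⟫ : ℝ) = ⟪y, x⟫ := by
      rw [real_inner_smul_right, real_inner_comm]
      field_simp
    rw [h2]
  have h2pi : (0:ℝ) < 2 * π := by positivity
  calc ∫ y, (realFourier ⇑f y)^2
      = ∫ y : EuclideanSpace ℝ (Fin n), ((2*π) ^ (-(n:ℝ)/2))^2 *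
          ((G ((2*π)⁻¹ • y)).re + (G ((2*π)⁻¹ • y)).im)^2 := by
        congr 1; ext y; rw [hpt y]; ring
    _ = ((2*π) ^ (-(n:ℝ)/2))^2 * ∫ y : EuclideanSpace ℝ (Fin n),
          ((G ((2*π)⁻¹ • y)).re + (G ((2*π)⁻¹ • y)).im)^2 := integral_const_mul _ _
    _ = ((2*π) ^ (-(n:ℝ)/2))^2 * ((2*π) ^ (Module.finrank ℝ (EuclideanSpace ℝ (Fin n)))
          • ∫ ξ, ((G ξ).re + (G ξ).im)^2) := by
        rw [MeasureTheory.Measure.integral_comp_inv_smul_of_nonneg volume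
          (fun ξ => ((G ξ).re + (G ξ).im)^2) h2pi.le]
    _ = ∫ ξ, ((G ξ).re + (G ξ).im)^2 := by
        rw [smul_eq_mul, ← mul_assoc, finrank_euclideanSpace_fin]
        have hsq : ((2*π) ^ (-(n:ℝ)/2))^2 = (2*π) ^ (-(n:ℝ)) := by
          rw [← Real.rpow_natCast ((2*π) ^ (-(n:ℝ)/2)) 2, ← Real.rpow_mul h2pi.le]
          norm_num
        rw [hsq, ← Real.rpow_natCast (2*π) n, ← Real.rpow_add h2pi]
        simp
    _ = ∫ ξ, (Complex.normSq (G ξ) + 2 * ((G ξ).re * (G ξ).im)) := by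
        congr 1; ext ξ; rw [Complex.normSq_apply]; ring
    _ = (∫ ξ, Complex.normSq (G ξ)) + 2 * ∫ ξ, (G ξ).re * (G ξ).im := by
        rw [integral_add hInt1 (hInt2.const_mul 2), integral_const_mul]
    _ = ∫ ξ, Complex.normSq (G ξ) := by rw [hzero]; ring
    _ = ∫ x, Complex.normSq (fC x) := parseval_c fC
    _ = ∫ x, (f x)^2 := by congr 1; ext x; rw [hfC x, Complex.normSq_ofReal, sq]
end

section
/- (Real Fourier transform of a convolution) For all Schwartz functions f, g : ℝ^n → ℝ and every y ∈ ℝ^n, (2π)^{-n/2} F_R[f ∗ g](y) = (1/2) ( F_R[f](y)·F_R[g](y) + F_R[f](y)·F_R[g](−y) + F_R[f](−y)·F_R[g](y) − F_R[f](−y)·F_R[g](−y) ). -/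
open MeasureTheory Real

noncomputable def conv {n : ℕ} (f g : EuclideanSpace ℝ (Fin n) → ℝ)
    (x : EuclideanSpace ℝ (Fin n)) : ℝ :=
  ∫ t, f (x - t) * g t

section aux

variable {n : ℕ} (y : EuclideanSpace ℝ (Fin n))

lemma cont_cos : Continuous fun x : EuclideanSpace ℝ (Fin n) => Real.cos (inner ℝ y x) :=
  Real.continuous_cos.comp (continuous_const.inner continuous_id)

lemma cont_sin : Continuous fun x : EuclideanSpace ℝ (Fin n) => Real.sin (inner ℝ y x) :=
  Real.continuous_sin.comp (continuous_const.inner continuous_id)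

lemma integ_mul_cos (f : SchwartzMap (EuclideanSpace ℝ (Fin n)) ℝ) :
    Integrable (fun x => f x * Real.cos (inner ℝ y x)) := by
  simpa [mul_comm] using f.integrable.bdd_mul (cont_cos y).aestronglyMeasurable (c := 1)
    (Filter.Eventually.of_forall fun x => by simpa using Real.abs_cos_le_one _)

lemma integ_mul_sin (f : SchwartzMap (EuclideanSpace ℝ (Fin n)) ℝ) :
    Integrable (fun x => f x * Real.sin (inner ℝ y x)) := by
  simpa [mul_comm] using f.integrable.bdd_mul (cont_sin y).aestronglyMeasurable (c := 1)
    (Filter.Eventually.of_forall fun x => by simpa using Real.abs_sin_le_one _)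

lemma realFourier_eq (f : SchwartzMap (EuclideanSpace ℝ (Fin n)) ℝ) :
    realFourier (⇑f) y = (2 * π) ^ (-(n : ℝ) / 2) *
      ((∫ x, f x * Real.cos (inner ℝ y x)) - ∫ x, f x * Real.sin (inner ℝ y x)) := by
  rw [realFourier, ← integral_sub (integ_mul_cos y f) (integ_mul_sin y f)]
  simp [mul_sub]

lemma realFourier_neg_eq (f : SchwartzMap (EuclideanSpace ℝ (Fin n)) ℝ) :
    realFourier (⇑f) (-y) = (2 * π) ^ (-(n : ℝ) / 2) *
      ((∫ x, f x * Real.cos (inner ℝ y x)) + ∫ x, f x * Real.sin (inner ℝ y x)) := by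
  rw [realFourier, ← integral_add (integ_mul_cos y f) (integ_mul_sin y f)]
  simp [mul_add, inner_neg_left, sub_neg_eq_add]

end aux

theorem realFourier_conv (n : ℕ) (f g : SchwartzMap (EuclideanSpace ℝ (Fin n)) ℝ) :
    ∀ y, (2 * π) ^ (-(n : ℝ) / 2) * realFourier (conv (⇑f) (⇑g)) y =
      (1 / 2) * (realFourier (⇑f) y * realFourier (⇑g) y
        + realFourier (⇑f) y * realFourier (⇑g) (-y)
        + realFourier (⇑f) (-y) * realFourier (⇑g) y
        - realFourier (⇑f) (-y) * realFourier (⇑g) (-y)) := by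
  intro y
  set c : ℝ := (2 * π) ^ (-(n : ℝ) / 2) with hc
  set Cf : ℝ := ∫ x, f x * Real.cos (inner ℝ y x) with hCf
  set Sf : ℝ := ∫ x, f x * Real.sin (inner ℝ y x) with hSf
  set Cg : ℝ := ∫ x, g x * Real.cos (inner ℝ y x) with hCg
  set Sg : ℝ := ∫ x, g x * Real.sin (inner ℝ y x) with hSg
  have key : realFourier (conv (⇑f) (⇑g)) y = c * (Cg * (Cf - Sf) - Sg * (Cf + Sf)) := by
    rw [realFourier]
    congr 1
    have hint : Integrable (Function.uncurry fun x t : EuclideanSpace ℝ (Fin n) =>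
        f (x - t) * g t * (Real.cos (inner ℝ y x) - Real.sin (inner ℝ y x)))
        (volume.prod volume) := by
      have h1 : Integrable (fun p : EuclideanSpace ℝ (Fin n) × EuclideanSpace ℝ (Fin n) =>
          (ContinuousLinearMap.mul ℝ ℝ) (g p.2) (f (p.1 - p.2))) (volume.prod volume) :=
        g.integrable.convolution_integrand (ContinuousLinearMap.mul ℝ ℝ) f.integrable
      have h2 := h1.bdd_mul
        (((cont_cos y).sub (cont_sin y)).comp continuous_fst).aestronglyMeasurable (c := 2)
        (Filter.Eventually.of_forall fun p => by
          have := Real.abs_cos_le_one (inner ℝ y p.1 : ℝ)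
          have := Real.abs_sin_le_one (inner ℝ y p.1 : ℝ)
          simp only [Function.comp, Real.norm_eq_abs]
          calc |Real.cos (inner ℝ y p.1) - Real.sin (inner ℝ y p.1)| ≤ _ := abs_sub _ _
            _ ≤ 2 := by linarith)
      refine h2.congr (Filter.Eventually.of_forall fun p => ?_)
      simp [Function.uncurry, ContinuousLinearMap.mul_apply']
      ring
    calc (∫ x, conv (⇑f) (⇑g) x * (Real.cos (inner ℝ y x) - Real.sin (inner ℝ y x)))
        = ∫ x, ∫ t, f (x - t) * g t * (Real.cos (inner ℝ y x) - Real.sin (inner ℝ y x)) := by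
          refine integral_congr_ae (Filter.Eventually.of_forall fun x => ?_)
          show conv (⇑f) (⇑g) x * _ = _
          rw [conv, ← integral_mul_const]
      _ = ∫ t, ∫ x, f (x - t) * g t * (Real.cos (inner ℝ y x) - Real.sin (inner ℝ y x)) := by
          exact integral_integral_swap hint
      _ = ∫ t, g t * Real.cos (inner ℝ y t) * (Cf - Sf) - g t * Real.sin (inner ℝ y t) * (Cf + Sf) := by
          refine integral_congr_ae (Filter.Eventually.of_forall fun t => ?_)
          dsimp only
          have shift : (∫ x, f (x - t) * g t *
              (Real.cos (inner ℝ y x) - Real.sin (inner ℝ y x)))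
              = ∫ x, f x * g t *
                (Real.cos ((inner ℝ y x : ℝ) + inner ℝ y t) - Real.sin ((inner ℝ y x : ℝ) + inner ℝ y t)) := by
            rw [← integral_add_right_eq_self (fun x => f (x - t) * g t *
              (Real.cos (inner ℝ y x) - Real.sin (inner ℝ y x))) t]
            simp [inner_add_right]
          rw [shift]
          have expand : ∀ x : EuclideanSpace ℝ (Fin n), f x * g t *
              (Real.cos ((inner ℝ y x : ℝ) + inner ℝ y t) - Real.sin ((inner ℝ y x : ℝ) + inner ℝ y t))
              = (f x * Real.cos (inner ℝ y x)) * (g t * (Real.cos (inner ℝ y t) - Real.sin (inner ℝ y t)))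
                - (f x * Real.sin (inner ℝ y x)) * (g t * (Real.sin (inner ℝ y t) + Real.cos (inner ℝ y t))) := by
            intro x
            rw [Real.cos_add, Real.sin_add]; ring
          rw [integral_congr_ae (Filter.Eventually.of_forall expand),
            integral_sub ((integ_mul_cos y f).mul_const _) ((integ_mul_sin y f).mul_const _),
            integral_mul_const, integral_mul_const, ← hCf, ← hSf]
          ring
      _ = Cg * (Cf - Sf) - Sg * (Cf + Sf) := by
          rw [integral_sub ((integ_mul_cos y g).mul_const _) ((integ_mul_sin y g).mul_const _),
            integral_mul_const, integral_mul_const, ← hCg, ← hSg]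
  rw [key, realFourier_eq y f, realFourier_eq y g, realFourier_neg_eq y f, realFourier_neg_eq y g]
  ring
end

section
/- (Real Fourier transform of a pointwise product) For all Schwartz functions f, g : ℝ^n → ℝ and every y ∈ ℝ^n, F_R[f · g](y) = (2π)^{-n/2} · (1/2) · ( (F_R[f] ∗ F_R[g])(y) + (F_R[f] ∗ (F_R[g] ∘ neg))(y) + ((F_R[f] ∘ neg) ∗ F_R[g])(y) − ((F_R[f] ∘ neg) ∗ (F_R[g] ∘ neg))(y) ), where (h ∘ neg)(x) = h(−x) and f · g denotes the pointwise product. -/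
open MeasureTheory Real

section helpers

open SchwartzMap Complex FourierTransform

noncomputable section
variable {n : ℕ}
local notation "En" => EuclideanSpace ℝ (Fin n)
set_option maxHeartbeats 1000000

/-- Complexification of a real Schwartz map. -/
def toC (f : 𝓢(En, ℝ)) : 𝓢(En, ℂ) :=
  SchwartzMap.bilinLeftCLM (ContinuousLinearMap.lsmul ℝ ℝ : ℝ →L[ℝ] ℂ →L[ℝ] ℂ)
    (Function.HasTemperateGrowth.const (1:ℂ)) f

lemma toC_apply (f : 𝓢(En, ℝ)) (x : En) : toC f x = (f x : ℂ) := by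
  show (f x : ℝ) • (1:ℂ) = _
  simp [Complex.real_smul]

lemma toC_coe (f : 𝓢(En, ℝ)) : ⇑(toC f) = fun x => ((f x : ℝ) : ℂ) :=
  funext (toC_apply f)

/-- Scaling as a continuous linear equiv. -/
def scaleEquiv (a : ℝ) (ha : a ≠ 0) : En ≃L[ℝ] En :=
  (LinearEquiv.smulOfNeZero ℝ _ a ha).toContinuousLinearEquiv

lemma scaleEquiv_apply (a : ℝ) (ha : a ≠ 0) (x : En) : scaleEquiv a ha x = a • x := rfl

/-- A Schwartz map precomposed with scaling. -/
def scaleS (a : ℝ) (ha : a ≠ 0) (Ψ : 𝓢(En, ℂ)) : 𝓢(En, ℂ) :=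
  SchwartzMap.compCLMOfContinuousLinearEquiv ℝ (scaleEquiv a ha) Ψ

lemma scaleS_apply (a : ℝ) (ha : a ≠ 0) (Ψ : 𝓢(En, ℂ)) (x : En) :
    scaleS a ha Ψ x = Ψ (a • x) := rfl

/-- Lemma B: realFourier in terms of the Mathlib Fourier transform. -/
lemma lemB (h : En → ℝ) (hi : Integrable h) (y : En) :
    realFourier h y = (2 * π) ^ (-(n : ℝ) / 2) *
      (((𝓕 (fun x => (h x : ℂ)) ((2 * π)⁻¹ • y)).re) +
        ((𝓕 (fun x => (h x : ℂ)) ((2 * π)⁻¹ • y)).im)) := by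
  rw [realFourier]
  congr 1
  rw [Real.fourier_eq']
  have key : ∀ x : En, (-2 * π * inner ℝ x ((2 * π)⁻¹ • y) : ℝ) = -(inner ℝ y x : ℝ) := by
    intro x
    rw [real_inner_smul_right, real_inner_comm]
    have h2π : (2 * π : ℝ) ≠ 0 := by positivity
    field_simp
  have hcont : Continuous fun x : En => cexp (↑(-(inner ℝ y x : ℝ)) * I) := by
    refine Complex.continuous_exp.comp ?_
    exact (Complex.continuous_ofReal.comp ((continuous_const.inner continuous_id).neg)).mul
      continuous_const
  simp_rw [key, smul_eq_mul]
  set F : En → ℂ := fun x => cexp (↑(-(inner ℝ y x : ℝ)) * I) * (h x : ℂ) with hF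
  have hFi : Integrable F := by
    apply (hi.ofReal).bdd_mul hcont.aestronglyMeasurable
    exact ae_of_all _ fun x => le_of_eq (Complex.norm_exp_ofReal_mul_I _)
  rw [show (integral volume F).re = RCLike.re (∫ x, F x) from rfl,
    show (integral volume F).im = RCLike.im (∫ x, F x) from rfl,
    ← integral_re hFi, ← integral_im hFi, ← integral_add]
  · apply integral_congr_ae
    filter_upwards with x
    have hFx : F x = ((h x * Real.cos (inner ℝ y x) : ℝ) : ℂ) +
        ((-(h x * Real.sin (inner ℝ y x)) : ℝ) : ℂ) * I := by
      rw [hF]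
      simp only [Complex.exp_mul_I, Complex.ofReal_neg, Complex.cos_neg, Complex.sin_neg,
        ← Complex.ofReal_cos, ← Complex.ofReal_sin]
      push_cast
      ring
    rw [show RCLike.re (F x) = (F x).re from rfl, show RCLike.im (F x) = (F x).im from rfl, hFx]
    simp only [Complex.add_re, Complex.add_im, Complex.mul_re, Complex.mul_im,
      Complex.ofReal_re, Complex.ofReal_im, Complex.I_re, Complex.I_im]
    ring
  · exact hFi.re
  · exact hFi.im

/-- Lemma A: multiplication formula for the Mathlib Fourier transform. -/
lemma lemA (f g : 𝓢(En, ℂ)) (ξ : En) :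
    ∫ s, 𝓕 ⇑f (ξ - s) * 𝓕 ⇑g s = 𝓕 (fun x => f x * g x) ξ := by
  set G : 𝓢(En, ℂ) := fourierTransformCLM ℂ g with hG
  have hGf : ⇑G = 𝓕 ⇑g := by simp [hG, fourier_coe]
  rw [← hGf]
  have hinv : ∀ x : En, (∫ s, cexp ((2 * π * inner ℝ s x : ℝ) * I) * G s) = g x := by
    intro x
    have := g.continuous.fourierInv_fourier_eq g.integrable (by rw [← hGf]; exact G.integrable)
    have h2 : 𝓕⁻ (𝓕 ⇑g) x = g x := by rw [this]
    rw [← h2, ← hGf, Real.fourierInv_eq']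
    simp_rw [smul_eq_mul]
  set Φ : En × En → ℂ := fun p => cexp ((-2 * π * inner ℝ p.2 (ξ - p.1) : ℝ) * I) * (G p.1 * f p.2)
    with hΦdef
  have hΦ : Integrable Φ := by
    apply (G.integrable.mul_prod f.integrable).bdd_mul
    · apply Continuous.aestronglyMeasurable
      apply Complex.continuous_exp.comp
      apply Continuous.mul _ continuous_const
      apply Complex.continuous_ofReal.comp
      exact (continuous_const.mul ((continuous_snd.inner (continuous_const.sub continuous_fst))))
    · exact ae_of_all _ fun p => le_of_eq (Complex.norm_exp_ofReal_mul_I _)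
  calc ∫ s, 𝓕 ⇑f (ξ - s) * G s
      = ∫ s, ∫ x, cexp ((-2 * π * inner ℝ x (ξ - s) : ℝ) * I) * (G s * f x) := by
        apply integral_congr_ae; filter_upwards with s
        rw [Real.fourier_eq', ← integral_mul_const]
        apply integral_congr_ae; filter_upwards with x
        rw [smul_eq_mul]; ring
    _ = ∫ x, ∫ s, cexp ((-2 * π * inner ℝ x (ξ - s) : ℝ) * I) * (G s * f x) :=
        integral_integral_swap hΦ
    _ = ∫ x, cexp ((-2 * π * inner ℝ x ξ : ℝ) * I) * (f x * g x) := by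
        apply integral_congr_ae; filter_upwards with x
        have key : ∀ s : En, ((-2 * π * inner ℝ x (ξ - s) : ℝ) : ℂ) * I =
            ((-2 * π * inner ℝ x ξ : ℝ) : ℂ) * I + ((2 * π * inner ℝ s x : ℝ) : ℂ) * I := by
          intro s
          rw [inner_sub_right, real_inner_comm x s]
          push_cast; ring
        simp_rw [key, Complex.exp_add]
        rw [show (∫ s, cexp (((-2 * π * inner ℝ x ξ : ℝ) : ℂ) * I) *
              cexp (((2 * π * inner ℝ s x : ℝ) : ℂ) * I) * (G s * f x)) =
            ∫ s, (cexp (((-2 * π * inner ℝ x ξ : ℝ) : ℂ) * I) * f x) *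
              (cexp (((2 * π * inner ℝ s x : ℝ) : ℂ) * I) * G s) from by
          apply integral_congr_ae; filter_upwards with s; ring]
        rw [integral_const_mul, hinv x]
        ring
    _ = 𝓕 (fun x => f x * g x) ξ := by
        rw [Real.fourier_eq']
        apply integral_congr_ae; filter_upwards with x
        rw [smul_eq_mul]

/-- Conjugation symmetry of the Fourier transform of a real function. -/
lemma lemConj (h : En → ℝ) (w : En) :
    𝓕 (fun x => (h x : ℂ)) (-w) = (starRingEnd ℂ) (𝓕 (fun x => (h x : ℂ)) w) := by
  rw [Real.fourier_eq', Real.fourier_eq', ← integral_conj]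
  apply integral_congr_ae; filter_upwards with x
  rw [smul_eq_mul, smul_eq_mul, map_mul, ← Complex.exp_conj]
  congr 1
  · congr 1
    simp only [map_mul, Complex.conj_ofReal, Complex.conj_I, inner_neg_right]
    push_cast
    ring
  · simp [Complex.conj_ofReal]

/-- Integrability of c * (re + eps * im) of a scaled Schwartz function. -/
lemma integrable_T (c ε : ℝ) (Ψ : 𝓢(En, ℂ)) (a : ℝ) (ha : a ≠ 0) :
    Integrable (fun t : En => c * ((Ψ (a • t)).re + ε * (Ψ (a • t)).im)) := by
  have hs : Integrable (fun t : En => ‖Ψ (a • t)‖) := by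
    have := ((scaleS a ha Ψ).integrable (μ := volume)).norm
    simpa [scaleS_apply] using this
  apply ((hs.const_mul (|c| * (1 + |ε|)))).mono'
  · apply Continuous.aestronglyMeasurable
    have hcont : Continuous fun t : En => Ψ (a • t) :=
      Ψ.continuous.comp (continuous_id.const_smul a)
    exact continuous_const.mul ((Complex.continuous_re.comp hcont).add
      (continuous_const.mul (Complex.continuous_im.comp hcont)))
  · filter_upwards with t
    set z := Ψ (a • t)
    have h1 : |z.re| ≤ ‖z‖ := Complex.abs_re_le_norm z
    have h2 : |z.im| ≤ ‖z‖ := Complex.abs_im_le_norm z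
    calc ‖c * (z.re + ε * z.im)‖ = |c| * |z.re + ε * z.im| := by
          rw [Real.norm_eq_abs, abs_mul]
      _ ≤ |c| * (|z.re| + |ε| * |z.im|) := by
          gcongr
          refine (abs_add_le _ _).trans ?_
          rw [abs_mul]
      _ ≤ |c| * (‖z‖ + |ε| * ‖z‖) := by gcongr
      _ = |c| * (1 + |ε|) * ‖z‖ := by ring

end
end helpers

set_option maxHeartbeats 2000000 in
open SchwartzMap Complex FourierTransform in
theorem realFourier_prod (n : ℕ) (f g : SchwartzMap (EuclideanSpace ℝ (Fin n)) ℝ) :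
    ∀ y, realFourier (fun x => f x * g x) y =
      (2 * π) ^ (-(n : ℝ) / 2) * (1 / 2) *
        (conv (realFourier (⇑f)) (realFourier (⇑g)) y
          + conv (realFourier (⇑f)) (fun x => realFourier (⇑g) (-x)) y
          + conv (fun x => realFourier (⇑f) (-x)) (realFourier (⇑g)) y
          - conv (fun x => realFourier (⇑f) (-x)) (fun x => realFourier (⇑g) (-x)) y) := by
  intro y
  have hπ : (0:ℝ) < 2 * π := by positivity
  set c : ℝ := (2 * π) ^ (-(n : ℝ) / 2) with hc
  set a : ℝ := (2 * π)⁻¹ with ha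
  have ha0 : a ≠ 0 := inv_ne_zero hπ.ne'
  set fc : SchwartzMap (EuclideanSpace ℝ (Fin n)) ℂ := toC f with hfc
  set gc : SchwartzMap (EuclideanSpace ℝ (Fin n)) ℂ := toC g with hgc
  set Φs := SchwartzMap.fourierTransformCLM ℂ fc with hΦs
  set Ψs := SchwartzMap.fourierTransformCLM ℂ gc with hΨs
  have hΦ : ⇑Φs = 𝓕 (fun x => ((f x : ℝ) : ℂ)) := by
    rw [hΦs, SchwartzMap.fourierTransformCLM_apply, fourier_coe, hfc, toC_coe]
  have hΨ : ⇑Ψs = 𝓕 (fun x => ((g x : ℝ) : ℂ)) := by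
    rw [hΨs, SchwartzMap.fourierTransformCLM_apply, fourier_coe, hgc, toC_coe]
  have hFf : ∀ u, realFourier ⇑f u = c * ((Φs (a • u)).re + (Φs (a • u)).im) := by
    intro u
    rw [lemB ⇑f f.integrable u, ← ha, ← hc, ← hΦ]
  have hFg : ∀ u, realFourier ⇑g u = c * ((Ψs (a • u)).re + (Ψs (a • u)).im) := by
    intro u
    rw [lemB ⇑g g.integrable u, ← ha, ← hc, ← hΨ]
  have hconjΦ : ∀ u, Φs (-u) = (starRingEnd ℂ) (Φs u) := by
    intro u
    rw [hΦ]; exact lemConj ⇑f u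
  have hconjΨ : ∀ u, Ψs (-u) = (starRingEnd ℂ) (Ψs u) := by
    intro u
    rw [hΨ]; exact lemConj ⇑g u
  have hFfneg : ∀ u, realFourier ⇑f (-u) = c * ((Φs (a • u)).re - (Φs (a • u)).im) := by
    intro u
    rw [hFf (-u), smul_neg, hconjΦ]
    simp [sub_eq_add_neg]
  have hFgneg : ∀ u, realFourier ⇑g (-u) = c * ((Ψs (a • u)).re - (Ψs (a • u)).im) := by
    intro u
    rw [hFg (-u), smul_neg, hconjΨ]
    simp [sub_eq_add_neg]
  -- the two factors
  set A : EuclideanSpace ℝ (Fin n) → ℂ := fun t => Φs (a • (y - t)) with hA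
  set B : EuclideanSpace ℝ (Fin n) → ℂ := fun t => Ψs (a • t) with hB
  have hA_cont : Continuous A :=
    Φs.continuous.comp ((continuous_const.sub continuous_id).const_smul a)
  obtain ⟨CA, hCA⟩ : ∃ C, ∀ x, ‖Φs x‖ ≤ C :=
    ⟨‖Φs.toBoundedContinuousFunction‖, fun x =>
      Φs.toBoundedContinuousFunction.norm_coe_le_norm x⟩
  have hA_bd : ∀ t, ‖A t‖ ≤ CA := fun t => hCA _
  have hB_int : Integrable B := by
    have := (scaleS a ha0 Ψs).integrable (μ := volume)
    exact this
  -- integrability of the four convolution integrands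
  have hbd : ∀ (ε : ℝ), |ε| = 1 → ∀ t : EuclideanSpace ℝ (Fin n),
      ‖c * ((A t).re + ε * (A t).im)‖ ≤ |c| * 2 * CA := by
    intro ε hε t
    have h1 : |(A t).re| ≤ ‖A t‖ := Complex.abs_re_le_norm _
    have h2 : |(A t).im| ≤ ‖A t‖ := Complex.abs_im_le_norm _
    have h3 : ‖A t‖ ≤ CA := hA_bd t
    calc ‖c * ((A t).re + ε * (A t).im)‖ = |c| * |(A t).re + ε * (A t).im| := by
          rw [Real.norm_eq_abs, abs_mul]
      _ ≤ |c| * (|(A t).re| + |ε| * |(A t).im|) := by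
          gcongr; refine (abs_add_le _ _).trans ?_; rw [abs_mul]
      _ ≤ |c| * (CA + 1 * CA) := by rw [hε]; gcongr <;> [exact h1.trans h3; exact h2.trans h3]
      _ = |c| * 2 * CA := by ring
  have hmeasA : ∀ (ε : ℝ), AEStronglyMeasurable
      (fun t : EuclideanSpace ℝ (Fin n) => c * ((A t).re + ε * (A t).im)) volume := by
    intro ε
    exact (continuous_const.mul ((Complex.continuous_re.comp hA_cont).add
      (continuous_const.mul (Complex.continuous_im.comp hA_cont)))).aestronglyMeasurable
  have hintB : ∀ (ε : ℝ), Integrable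
      (fun t : EuclideanSpace ℝ (Fin n) => c * ((B t).re + ε * (B t).im)) := by
    intro ε
    exact integrable_T c ε Ψs a ha0
  have hI : ∀ (ε δ : ℝ), |ε| = 1 → Integrable (fun t : EuclideanSpace ℝ (Fin n) =>
      (c * ((A t).re + ε * (A t).im)) * (c * ((B t).re + δ * (B t).im))) := by
    intro ε δ hε
    exact (hintB δ).bdd_mul (hmeasA ε) (ae_of_all _ (hbd ε hε))
  have hI1 := hI 1 1 (by norm_num)
  have hI2 := hI 1 (-1) (by norm_num)
  have hI3 := hI (-1) 1 (by norm_num)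
  have hI4 := hI (-1) (-1) (by norm_num)
  -- rewrite the four conv terms
  have e1 : conv (realFourier ⇑f) (realFourier ⇑g) y
      = ∫ t, (c * ((A t).re + 1 * (A t).im)) * (c * ((B t).re + 1 * (B t).im)) := by
    rw [conv]
    apply integral_congr_ae; filter_upwards with t
    rw [hFf, hFg]; simp only [hA, hB]; ring
  have e2 : conv (realFourier ⇑f) (fun x => realFourier ⇑g (-x)) y
      = ∫ t, (c * ((A t).re + 1 * (A t).im)) * (c * ((B t).re + (-1) * (B t).im)) := by
    rw [conv]
    apply integral_congr_ae; filter_upwards with t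
    rw [hFf, hFgneg]; simp only [hA, hB]; ring
  have e3 : conv (fun x => realFourier ⇑f (-x)) (realFourier ⇑g) y
      = ∫ t, (c * ((A t).re + (-1) * (A t).im)) * (c * ((B t).re + 1 * (B t).im)) := by
    rw [conv]
    apply integral_congr_ae; filter_upwards with t
    rw [hFfneg, hFg]; simp only [hA, hB]; ring
  have e4 : conv (fun x => realFourier ⇑f (-x)) (fun x => realFourier ⇑g (-x)) y
      = ∫ t, (c * ((A t).re + (-1) * (A t).im)) * (c * ((B t).re + (-1) * (B t).im)) := by
    rw [conv]
    apply integral_congr_ae; filter_upwards with t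
    rw [hFfneg, hFgneg]; simp only [hA, hB]; ring
  have hI12 : Integrable (fun t : EuclideanSpace ℝ (Fin n) =>
      c * ((A t).re + 1 * (A t).im) * (c * ((B t).re + 1 * (B t).im))
        + c * ((A t).re + 1 * (A t).im) * (c * ((B t).re + -1 * (B t).im))) volume :=
    hI1.add hI2
  have hI123 : Integrable (fun t : EuclideanSpace ℝ (Fin n) =>
      (c * ((A t).re + 1 * (A t).im) * (c * ((B t).re + 1 * (B t).im))
        + c * ((A t).re + 1 * (A t).im) * (c * ((B t).re + -1 * (B t).im)))
        + c * ((A t).re + -1 * (A t).im) * (c * ((B t).re + 1 * (B t).im))) volume :=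
    hI12.add hI3
  rw [e1, e2, e3, e4, ← integral_add hI1 hI2, ← integral_add hI12 hI3,
    ← integral_sub hI123 hI4]
  -- the combined integrand
  have hH : Integrable (fun t => A t * B t) :=
    hB_int.bdd_mul hA_cont.aestronglyMeasurable (ae_of_all _ hA_bd)
  have ecomb : (∫ t, ((c * ((A t).re + 1 * (A t).im)) * (c * ((B t).re + 1 * (B t).im))
        + (c * ((A t).re + 1 * (A t).im)) * (c * ((B t).re + (-1) * (B t).im))
        + (c * ((A t).re + (-1) * (A t).im)) * (c * ((B t).re + 1 * (B t).im))
        - (c * ((A t).re + (-1) * (A t).im)) * (c * ((B t).re + (-1) * (B t).im))))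
      = ∫ t, 2 * c ^ 2 * ((A t * B t).re + (A t * B t).im) := by
    apply integral_congr_ae; filter_upwards with t
    simp only [Complex.mul_re, Complex.mul_im]
    ring
  rw [ecomb]
  rw [MeasureTheory.integral_const_mul]
  have hsplit : (∫ t, ((A t * B t).re + (A t * B t).im))
      = (∫ t, A t * B t).re + (∫ t, A t * B t).im := by
    rw [show (∫ t, A t * B t).re = RCLike.re (∫ t, A t * B t) from rfl,
      show (∫ t, A t * B t).im = RCLike.im (∫ t, A t * B t) from rfl,
      ← integral_re hH, ← integral_im hH, ← integral_add hH.re hH.im]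
    rfl
  rw [hsplit]
  -- change of variables
  have hcv : (∫ t, A t * B t) = ((2 * π) ^ n : ℝ) • ∫ s, Φs (a • y - s) * Ψs s := by
    have h1 := MeasureTheory.Measure.integral_comp_smul (volume : Measure (EuclideanSpace ℝ (Fin n)))
      (fun t => A t * B t) (2 * π)
    have hrank : Module.finrank ℝ (EuclideanSpace ℝ (Fin n)) = n := finrank_euclideanSpace_fin
    rw [hrank] at h1
    have h2 : ∀ s : EuclideanSpace ℝ (Fin n), A ((2 * π) • s) * B ((2 * π) • s)
        = Φs (a • y - s) * Ψs s := by
      intro s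
      have haa : a • (2 * π) • s = s := by
        rw [smul_smul, ha, inv_mul_cancel₀ hπ.ne', one_smul]
      rw [hA, hB]
      simp only []
      rw [smul_sub, haa]
    simp only [h2] at h1
    rw [h1, smul_smul, abs_of_pos (by positivity : (0:ℝ) < ((2 * π) ^ n)⁻¹),
      mul_inv_cancel₀ (by positivity : ((2 * π : ℝ) ^ n) ≠ 0), one_smul]
  rw [hcv]
  -- apply the multiplication formula
  have hmul : (∫ s, Φs (a • y - s) * Ψs s) = 𝓕 (fun x => fc x * gc x) (a • y) := by
    rw [← lemA fc gc (a • y)]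
    apply integral_congr_ae; filter_upwards with s
    rw [show Φs (a • y - s) = (⇑Φs) (a • y - s) from rfl, hΦ, ← toC_coe, ← hfc,
      show Ψs s = (⇑Ψs) s from rfl, hΨ, ← toC_coe, ← hgc]
  rw [hmul]
  -- left-hand side via lemB
  have hfgint : Integrable (fun x : EuclideanSpace ℝ (Fin n) => f x * g x) := by
    apply g.integrable.bdd_mul f.continuous.aestronglyMeasurable
    exact ae_of_all _ fun x =>
      f.toBoundedContinuousFunction.norm_coe_le_norm x
  have hlhs : realFourier (fun x => f x * g x) y
      = c * ((𝓕 (fun x => fc x * gc x) (a • y)).re + (𝓕 (fun x => fc x * gc x) (a • y)).im) := by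
    rw [lemB _ hfgint y, ← ha, ← hc]
    have : (fun x : EuclideanSpace ℝ (Fin n) => ((f x * g x : ℝ) : ℂ))
        = fun x => fc x * gc x := by
      funext x
      rw [hfc, hgc, toC_apply, toC_apply]
      push_cast
      ring
    rw [this]
  rw [hlhs]
  -- final arithmetic
  set Z := 𝓕 (fun x => fc x * gc x) (a • y) with hZ
  have hsm : ((((2 * π) ^ n : ℝ)) • Z).re + ((((2 * π) ^ n : ℝ)) • Z).im
      = ((2 * π) ^ n : ℝ) * (Z.re + Z.im) := by
    rw [Complex.real_smul]
    simp only [Complex.mul_re, Complex.mul_im, Complex.ofReal_re, Complex.ofReal_im]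
    ring
  rw [hsm]
  have hcc : c * c * (2 * π) ^ n = 1 := by
    have h1 : c * c = (2 * π) ^ (-(n : ℝ)) := by
      rw [hc, ← Real.rpow_add hπ]
      congr 1
      ring
    have h2 : ((2 * π : ℝ)) ^ n = (2 * π : ℝ) ^ ((n : ℝ)) := (Real.rpow_natCast _ n).symm
    rw [h1, h2, ← Real.rpow_add hπ]
    simp
  have : c * (1 / 2) * (2 * c ^ 2 * ((2 * π) ^ n * (Z.re + Z.im)))
      = (c * c * (2 * π) ^ n) * (c * (Z.re + Z.im)) := by ring
  rw [this, hcc, one_mul]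
end
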